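/- arXiv:cond-mat/0602276 — 2 statements merged into one kernel-verified Lean document; each statement's English description precedes it below -/
import Mathlib

section
/- Let T_n = n + \sum_{j=1}^n ln^2(j) and \Delta_n = (n - \sum_{j=1}^n ln^2(j))^2 + 4(\sum_{j=1}^n ln(j))^2. Then (T_n + \sqrt{\Delta_n}) / (n ln^2(n)) \to 2 as n \to \infty. -/
open Finset Real Filter

noncomputable def L (n : ℕ) : ℝ := ∑ j ∈ Finset.Icc 1 n, Real.log j
noncomputable def Q (n : ℕ) : ℝ := ∑ j ∈ Finset.Icc 1 n, (Real.log j)^2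

noncomputable def A (n : ℕ) : Matrix (Fin 2) (Fin 2) ℝ := !![(n:ℝ), L n; L n, Q n]

lemma hA (n : ℕ) : (A n).IsHermitian := by
  show (A n).conjTranspose = A n
  ext i j
  fin_cases i <;> fin_cases j <;> simp [A]

noncomputable def lmax (n : ℕ) : ℝ := max ((hA n).eigenvalues 0) ((hA n).eigenvalues 1)
noncomputable def lmin (n : ℕ) : ℝ := min ((hA n).eigenvalues 0) ((hA n).eigenvalues 1)

lemma L_eq_log_factorial (n : ℕ) : L n = Real.log (n.factorial) := by
  have h : ∀ j ∈ Finset.Icc 1 n, ((j : ℝ)) ≠ 0 := by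
    intro j hj
    simp only [Finset.mem_Icc] at hj
    have : 0 < j := hj.1
    positivity
  rw [L, ← Real.log_prod h, ← Nat.cast_prod]
  congr 2
  rw [← Finset.Ico_add_one_right_eq_Icc, Finset.prod_Ico_id_eq_factorial]

lemma L_nonneg (n : ℕ) : 0 ≤ L n := by
  apply Finset.sum_nonneg
  intro j hj
  simp only [Finset.mem_Icc] at hj
  exact Real.log_nonneg (by exact_mod_cast hj.1)

lemma L_le (n : ℕ) : L n ≤ (n : ℝ) * Real.log n := by
  have : L n ≤ ∑ _j ∈ Finset.Icc 1 n, Real.log n := by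
    apply Finset.sum_le_sum
    intro j hj
    simp only [Finset.mem_Icc] at hj
    exact Real.log_le_log (by exact_mod_cast hj.1) (by exact_mod_cast hj.2)
  simpa [Nat.card_Icc] using this

lemma L_ge (n : ℕ) (hn : 1 ≤ n) : (n : ℝ) * Real.log n - n ≤ L n := by
  have hfac : (0 : ℝ) < n.factorial := by exact_mod_cast n.factorial_pos
  have hnp : (0 : ℝ) < n := by exact_mod_cast hn
  have h := Real.pow_div_factorial_le_exp (x := (n : ℝ)) hnp.le n
  have hlog := Real.log_le_log (by positivity) h
  rw [Real.log_div (by positivity) hfac.ne', Real.log_pow, Real.log_exp] at hlog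
  rw [L_eq_log_factorial]
  push_cast at hlog ⊢
  linarith

lemma Q_nonneg (n : ℕ) : 0 ≤ Q n := by
  apply Finset.sum_nonneg; intro j hj; positivity

lemma Q_le (n : ℕ) : Q n ≤ (n : ℝ) * (Real.log n)^2 := by
  have : Q n ≤ ∑ _j ∈ Finset.Icc 1 n, (Real.log n)^2 := by
    apply Finset.sum_le_sum
    intro j hj
    simp only [Finset.mem_Icc] at hj
    have h1 : (0:ℝ) ≤ Real.log j := Real.log_nonneg (by exact_mod_cast hj.1)
    have h2 : Real.log j ≤ Real.log n :=
      Real.log_le_log (by exact_mod_cast hj.1) (by exact_mod_cast hj.2)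
    exact pow_le_pow_left₀ h1 h2 2
  simpa [Nat.card_Icc] using this

lemma Q_ge (n : ℕ) : (L n)^2 ≤ (n : ℝ) * Q n := by
  have := sq_sum_le_card_mul_sum_sq (s := Finset.Icc 1 n) (f := fun j => Real.log j)
  simpa [L, Q, Nat.card_Icc] using this

lemma tendsto_log_nat : Tendsto (fun n : ℕ => Real.log n) atTop atTop :=
  Real.tendsto_log_atTop.comp tendsto_natCast_atTop_atTop

lemma ev_log_pos : ∀ᶠ n : ℕ in atTop, 1 < Real.log n := by
  filter_upwards [tendsto_log_nat.eventually_gt_atTop 1] with n h using h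

lemma tendsto_a : Tendsto (fun n : ℕ => (n : ℝ) / ((n:ℝ) * (Real.log n)^2)) atTop (nhds 0) := by
  have h2 : Tendsto (fun n : ℕ => (Real.log n)^2) atTop atTop :=
    (tendsto_pow_atTop two_ne_zero).comp tendsto_log_nat
  have h3 : Tendsto (fun n : ℕ => ((Real.log n)^2)⁻¹) atTop (nhds 0) :=
    h2.inv_tendsto_atTop
  apply h3.congr'
  filter_upwards [ev_log_pos, eventually_ge_atTop 1] with n hl hn
  have hnp : (0:ℝ) < n := by exact_mod_cast hn
  have hlp : (0:ℝ) < Real.log n := by linarith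
  rw [eq_comm, div_eq_iff (by positivity)]
  field_simp

lemma tendsto_c : Tendsto (fun n : ℕ => L n / ((n:ℝ) * (Real.log n)^2)) atTop (nhds 0) := by
  have hinv : Tendsto (fun n : ℕ => (Real.log n)⁻¹) atTop (nhds 0) :=
    tendsto_log_nat.inv_tendsto_atTop
  apply squeeze_zero' (g := fun n : ℕ => (Real.log n)⁻¹)
  · filter_upwards [ev_log_pos] with n hl
    exact div_nonneg (L_nonneg n) (by positivity)
  · filter_upwards [ev_log_pos, eventually_ge_atTop 1] with n hl hn
    have hnp : (0:ℝ) < n := by exact_mod_cast hn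
    have hlp : (0:ℝ) < Real.log n := by linarith
    rw [div_le_iff₀ (by positivity)]
    calc L n ≤ (n:ℝ) * Real.log n := L_le n
    _ = (Real.log n)⁻¹ * ((n:ℝ) * (Real.log n)^2) := by field_simp
  · exact hinv

lemma tendsto_b : Tendsto (fun n : ℕ => Q n / ((n:ℝ) * (Real.log n)^2)) atTop (nhds 1) := by
  have hinv : Tendsto (fun n : ℕ => (Real.log n)⁻¹) atTop (nhds 0) :=
    tendsto_log_nat.inv_tendsto_atTop
  have hlow : Tendsto (fun n : ℕ => (1 - (Real.log n)⁻¹)^2) atTop (nhds 1) := by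
    have := ((tendsto_const_nhds (x := (1:ℝ))).sub hinv).pow 2
    simpa using this
  apply tendsto_of_tendsto_of_tendsto_of_le_of_le' hlow tendsto_const_nhds
  · filter_upwards [ev_log_pos, eventually_ge_atTop 1] with n hl hn
    have hnp : (0:ℝ) < n := by exact_mod_cast hn
    have hlp : (0:ℝ) < Real.log n := by linarith
    have hQ : (n:ℝ) * ((Real.log n - 1)^2 * n) ≤ (n:ℝ) * Q n := by
      calc (n:ℝ) * ((Real.log n - 1)^2 * n) = ((n:ℝ) * Real.log n - n)^2 := by ring
      _ ≤ (L n)^2 := by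
          apply sq_le_sq'
          · nlinarith [L_nonneg n]
          · exact L_ge n hn
      _ ≤ (n:ℝ) * Q n := Q_ge n
    have hQ2 : (Real.log n - 1)^2 * n ≤ Q n := le_of_mul_le_mul_left hQ hnp
    rw [le_div_iff₀ (by positivity)]
    calc (1 - (Real.log n)⁻¹)^2 * ((n:ℝ) * Real.log n ^ 2)
        = (Real.log n - 1)^2 * n := by field_simp
    _ ≤ Q n := hQ2
  · filter_upwards [ev_log_pos, eventually_ge_atTop 1] with n hl hn
    have hnp : (0:ℝ) < n := by exact_mod_cast hn
    rw [div_le_one (by positivity)]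
    exact Q_le n

/-- With `T n = n + ∑ ln² j` and `Δ n = (n - ∑ ln² j)² + 4 (∑ ln j)²`,
`(T n + √(Δ n)) / (n ln² n) → 2`. -/
theorem lam_max_asymp :
    Filter.Tendsto
      (fun n : ℕ =>
        (((n : ℝ) + Q n) + Real.sqrt (((n : ℝ) - Q n)^2 + 4 * (L n)^2)) /
          ((n : ℝ) * (Real.log n)^2))
      Filter.atTop (nhds 2) := by
  have key : Tendsto
      (fun n : ℕ =>
        (n:ℝ) / ((n:ℝ) * (Real.log n)^2) + Q n / ((n:ℝ) * (Real.log n)^2) +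
          Real.sqrt (((n:ℝ) / ((n:ℝ) * (Real.log n)^2) - Q n / ((n:ℝ) * (Real.log n)^2))^2
            + 4 * (L n / ((n:ℝ) * (Real.log n)^2))^2))
      atTop (nhds (0 + 1 + Real.sqrt ((0 - 1)^2 + 4 * 0^2))) := by
    exact (tendsto_a.add tendsto_b).add
      ((((tendsto_a.sub tendsto_b).pow 2).add
        ((tendsto_c.pow 2).const_mul 4)).sqrt)
  have h2 : (0:ℝ) + 1 + Real.sqrt ((0 - 1)^2 + 4 * 0^2) = 2 := by
    norm_num
  rw [h2] at key
  apply key.congr'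
  filter_upwards [ev_log_pos, eventually_ge_atTop 1] with n hl hn
  have hnp : (0:ℝ) < n := by exact_mod_cast hn
  have hlp : (0:ℝ) < Real.log n := by linarith
  set d : ℝ := (n:ℝ) * (Real.log n)^2 with hd
  have hdp : 0 < d := by positivity
  have hsq : ((n:ℝ)/d - Q n/d)^2 + 4 * (L n/d)^2
      = (((n:ℝ) - Q n)^2 + 4 * (L n)^2) / d^2 := by
    field_simp
  rw [hsq, Real.sqrt_div (by positivity), Real.sqrt_sq hdp.le]
  rw [add_div, add_div]
end

section
/- Let T_n = n + \sum_{j=1}^n ln^2(j) and \Delta_n = (n - \sum_{j=1}^n ln^2(j))^2 + 4(\sum_{j=1}^n ln(j))^2. Then (T_n - \sqrt{\Delta_n}) \cdot ln^2(n) / n \to 2 as n \to \infty. -/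
open Finset Real Filter

lemma sum_le_int (f : ℝ → ℝ) (hf : ∀ b : ℝ, MonotoneOn f (Set.Icc 1 b)) (n : ℕ) :
    ∑ j ∈ Finset.Icc 1 n, f j ≤ ∫ x in (1:ℝ)..(1+(n:ℕ)), f x := by
  have h := MonotoneOn.sum_le_integral (f := f) (x₀ := 1) (a := n) (hf _)
  refine le_trans (le_of_eq ?_) h
  rw [← Finset.Ico_add_one_right_eq_Icc, Finset.sum_Ico_eq_sum_range]
  apply Finset.sum_congr (by norm_num)
  intro i _
  push_cast
  ring_nf

lemma int_le_sum (f : ℝ → ℝ) (hf : ∀ b : ℝ, MonotoneOn f (Set.Icc 1 b)) (hf1 : f 1 = 0)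
    (n : ℕ) (hn : 1 ≤ n) :
    (∫ x in (1:ℝ)..(n:ℕ), f x) ≤ ∑ j ∈ Finset.Icc 1 n, f j := by
  have h := MonotoneOn.integral_le_sum (f := f) (x₀ := 1) (a := n-1) (hf _)
  have hcast : (1:ℝ) + ((n-1:ℕ):ℝ) = (n:ℝ) := by
    rw [Nat.cast_sub hn]; ring
  rw [hcast] at h
  refine le_trans h (le_of_eq ?_)
  have : ∑ j ∈ Finset.Icc 1 n, f j = ∑ j ∈ Finset.Icc 2 n, f j := by
    rw [← Finset.sum_Ioc_add_eq_sum_Icc hn]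
    simp [hf1]
    congr 1
  rw [this, ← Finset.Ico_add_one_right_eq_Icc, Finset.sum_Ico_eq_sum_range]
  have h2 : n + 1 - 2 = n - 1 := by omega
  rw [h2]
  apply Finset.sum_congr rfl
  intro i _
  push_cast
  ring_nf

lemma log_monoOn (b : ℝ) : MonotoneOn Real.log (Set.Icc 1 b) := by
  intro x hx y _ hxy
  exact Real.log_le_log (by linarith [hx.1]) hxy

lemma logsq_monoOn (b : ℝ) : MonotoneOn (fun x => (Real.log x)^2) (Set.Icc 1 b) := by
  intro x hx y hy hxy
  have h1 : Real.log x ≤ Real.log y := Real.log_le_log (by linarith [hx.1]) hxy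
  have h0 : 0 ≤ Real.log x := Real.log_nonneg hx.1
  exact pow_le_pow_left₀ h0 h1 2

lemma integral_logsq (b : ℝ) (hb : 1 ≤ b) :
    ∫ x in (1:ℝ)..b, (Real.log x)^2
      = b * (Real.log b)^2 - 2*b*Real.log b + 2*b - 2 := by
  have key : ∀ t ∈ Set.uIcc (1:ℝ) b,
      HasDerivAt (fun t : ℝ => t * (Real.log t)^2 - 2*t*Real.log t + 2*t)
        ((Real.log t)^2) t := by
    intro t ht
    rw [Set.uIcc_of_le hb] at ht
    have ht0 : (0:ℝ) < t := lt_of_lt_of_le one_pos ht.1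
    have h1 : HasDerivAt (fun t : ℝ => t * (Real.log t)^2)
        ((Real.log t)^2 + 2*Real.log t) t := by
      have := (hasDerivAt_id t).mul (((Real.hasDerivAt_log ht0.ne').pow 2))
      refine this.congr_deriv ?_
      simp only [Pi.pow_apply, id]
      field_simp
      norm_num
      ring
    have h2 : HasDerivAt (fun t : ℝ => 2*t*Real.log t)
        (2*Real.log t + 2) t := by
      have := ((hasDerivAt_id t).const_mul (2:ℝ)).mul (Real.hasDerivAt_log ht0.ne')
      refine this.congr_deriv ?_
      simp only [id]
      field_simp
    have h3 : HasDerivAt (fun t : ℝ => 2*t) (2:ℝ) t := by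
      simpa using (hasDerivAt_id t).const_mul (2:ℝ)
    refine (((h1.sub h2).add h3).congr_deriv ?_)
    ring
  have hcont : IntervalIntegrable (fun x => (Real.log x)^2) MeasureTheory.volume 1 b := by
    apply ContinuousOn.intervalIntegrable
    apply ContinuousOn.pow
    apply Real.continuousOn_log.mono
    rw [Set.uIcc_of_le hb]
    intro x hx
    simp only [Set.mem_compl_iff, Set.mem_singleton_iff]
    nlinarith [hx.1]
  have := intervalIntegral.integral_eq_sub_of_hasDerivAt key hcont
  rw [this]
  simp

lemma integral_log' (b : ℝ) (hb : 1 ≤ b) :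
    ∫ x in (1:ℝ)..b, Real.log x = b * Real.log b - b + 1 := by
  rw [integral_log]
  simp

noncomputable def eL (n : ℕ) : ℝ := L n - ((n:ℝ)*Real.log n - n)
noncomputable def eQ (n : ℕ) : ℝ :=
  Q n - ((n:ℝ)*(Real.log n)^2 - 2*(n:ℝ)*Real.log n + 2*(n:ℝ))

lemma L_eq (n : ℕ) : L n = (n:ℝ)*Real.log n - n + eL n := by simp [eL]
lemma Q_eq (n : ℕ) :
    Q n = (n:ℝ)*(Real.log n)^2 - 2*(n:ℝ)*Real.log n + 2*(n:ℝ) + eQ n := by simp [eQ]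

lemma log_diff_le (n : ℕ) (hn : 1 ≤ n) :
    Real.log ((n:ℝ)+1) - Real.log n ≤ 1/(n:ℝ) := by
  have hn0 : (0:ℝ) < n := by exact_mod_cast hn
  have h := Real.log_le_sub_one_of_pos (x := ((n:ℝ)+1)/n) (by positivity)
  rw [Real.log_div (by positivity) (by positivity)] at h
  have h2 : ((n:ℝ)+1)/n - 1 = 1/n := by field_simp; ring
  linarith

lemma eL_bounds (n : ℕ) (hn : 1 ≤ n) :
    0 ≤ eL n ∧ eL n ≤ Real.log ((n:ℝ)+1) + 1 := by
  have hn1 : (1:ℝ) ≤ n := by exact_mod_cast hn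
  have hlow := int_le_sum Real.log log_monoOn Real.log_one n hn
  rw [integral_log' _ hn1] at hlow
  have hhigh := sum_le_int Real.log log_monoOn n
  rw [integral_log' _ (by linarith)] at hhigh
  have hd := log_diff_le n hn
  have h0 : 0 ≤ Real.log (n:ℝ) := Real.log_nonneg hn1
  constructor
  · simp only [eL]
    show 0 ≤ (∑ j ∈ Finset.Icc 1 n, Real.log j) - _
    linarith [hlow]
  · simp only [eL]
    show (∑ j ∈ Finset.Icc 1 n, Real.log j) - _ ≤ _
    have hkey : (1+(n:ℝ)) * Real.log (1+(n:ℝ)) - (n:ℝ)*Real.log n ≤ Real.log ((n:ℝ)+1) + 1 := by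
      have hc : (1:ℝ)+(n:ℝ) = (n:ℝ)+1 := by ring
      rw [hc]
      have : (n:ℝ) * (Real.log ((n:ℝ)+1) - Real.log n) ≤ 1 := by
        calc (n:ℝ) * (Real.log ((n:ℝ)+1) - Real.log n) ≤ (n:ℝ) * (1/n) := by
              apply mul_le_mul_of_nonneg_left hd (by linarith)
          _ = 1 := by field_simp
      nlinarith
    linarith [hhigh]

lemma eQ_bounds (n : ℕ) (hn : 1 ≤ n) :
    -2 ≤ eQ n ∧ eQ n ≤ (Real.log ((n:ℝ)+1))^2 + 2*Real.log ((n:ℝ)+1) := by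
  have hn1 : (1:ℝ) ≤ n := by exact_mod_cast hn
  have hn0 : (0:ℝ) < n := by linarith
  have hlow := int_le_sum (fun x => (Real.log x)^2) logsq_monoOn (by simp) n hn
  rw [integral_logsq _ hn1] at hlow
  have hhigh := sum_le_int (fun x => (Real.log x)^2) logsq_monoOn n
  rw [integral_logsq _ (by linarith)] at hhigh
  have hd := log_diff_le n hn
  have h0 : 0 ≤ Real.log (n:ℝ) := Real.log_nonneg hn1
  have h1 : Real.log (n:ℝ) ≤ Real.log ((n:ℝ)+1) :=
    Real.log_le_log hn0 (by linarith)
  constructor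
  · simp only [eQ]
    show (∑ j ∈ Finset.Icc 1 n, (Real.log j)^2) - _ ≥ _
    linarith [hlow]
  · simp only [eQ]
    show (∑ j ∈ Finset.Icc 1 n, (Real.log j)^2) - _ ≤ _
    have hc : (1:ℝ)+(n:ℝ) = (n:ℝ)+1 := by ring
    rw [hc] at hhigh
    set a := Real.log ((n:ℝ)+1)
    set b := Real.log (n:ℝ)
    have key : (n:ℝ) * (a - b) ≤ 1 := by
      calc (n:ℝ) * (a - b) ≤ (n:ℝ) * (1/n) := by
            apply mul_le_mul_of_nonneg_left hd (by linarith)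
        _ = 1 := by field_simp
    have key2 : (n:ℝ) * (a - b) * (a + b) ≤ 1 * (a + b) := by
      apply mul_le_mul_of_nonneg_right key (by linarith)
    nlinarith [mul_nonneg (mul_nonneg (by linarith : (0:ℝ) ≤ n) (by linarith : 0 ≤ a - b)) (by linarith : 0 ≤ a - b)]

lemma tlog (k : ℕ) : Tendsto (fun n:ℕ => (Real.log ((n:ℝ)+1))^k / n) atTop (nhds 0) := by
  have h := Real.tendsto_pow_log_div_mul_add_atTop 1 (-1) k one_ne_zero
  have hc : Tendsto (fun n:ℕ => (n:ℝ)+1) atTop atTop :=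
    tendsto_atTop_add_const_right atTop 1 tendsto_natCast_atTop_atTop
  refine (h.comp hc).congr (fun n => ?_)
  simp [Function.comp]

lemma tinv : Tendsto (fun n:ℕ => (Real.log n)⁻¹) atTop (nhds 0) :=
  (Real.tendsto_log_atTop.comp tendsto_natCast_atTop_atTop).inv_tendsto_atTop

lemma l1 : Tendsto (fun n:ℕ => eL n / n) atTop (nhds 0) := by
  have hup : Tendsto (fun n:ℕ => (Real.log ((n:ℝ)+1))^1/n + (Real.log ((n:ℝ)+1))^0/n)
      atTop (nhds (0+0)) := (tlog 1).add (tlog 0)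
  rw [add_zero] at hup
  apply tendsto_of_tendsto_of_tendsto_of_le_of_le' tendsto_const_nhds hup
  · filter_upwards [eventually_ge_atTop 1] with n hn
    exact div_nonneg (eL_bounds n hn).1 (Nat.cast_nonneg n)
  · filter_upwards [eventually_ge_atTop 1] with n hn
    rw [pow_one, pow_zero, ← add_div]
    have h2 := (eL_bounds n hn).2
    have hn0 : (0:ℝ) ≤ n := Nat.cast_nonneg n
    gcongr

lemma l2 : Tendsto (fun n:ℕ => eL n * Real.log n / n) atTop (nhds 0) := by
  have hup : Tendsto (fun n:ℕ => (Real.log ((n:ℝ)+1))^2/n + (Real.log ((n:ℝ)+1))^1/n)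
      atTop (nhds (0+0)) := (tlog 2).add (tlog 1)
  rw [add_zero] at hup
  apply tendsto_of_tendsto_of_tendsto_of_le_of_le' tendsto_const_nhds hup
  · filter_upwards [eventually_ge_atTop 1] with n hn
    have hn1 : (1:ℝ) ≤ n := by exact_mod_cast hn
    exact div_nonneg (mul_nonneg (eL_bounds n hn).1 (Real.log_nonneg hn1)) (Nat.cast_nonneg n)
  · filter_upwards [eventually_ge_atTop 1] with n hn
    have hn1 : (1:ℝ) ≤ n := by exact_mod_cast hn
    have h1 : Real.log (n:ℝ) ≤ Real.log ((n:ℝ)+1) :=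
      Real.log_le_log (by linarith) (by linarith)
    have h0 : 0 ≤ Real.log (n:ℝ) := Real.log_nonneg hn1
    rw [pow_two, pow_one, ← add_div]
    have hb := (eL_bounds n hn)
    have hkey : eL n * Real.log (n:ℝ)
        ≤ Real.log ((n:ℝ)+1) * Real.log ((n:ℝ)+1) + Real.log ((n:ℝ)+1) := by
      nlinarith [hb.1, hb.2]
    have hn0 : (0:ℝ) ≤ n := Nat.cast_nonneg n
    gcongr

lemma l3 : Tendsto (fun n:ℕ => eQ n / n) atTop (nhds 0) := by
  have hup : Tendsto (fun n:ℕ => (Real.log ((n:ℝ)+1))^2/n + 2*((Real.log ((n:ℝ)+1))^1/n))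
      atTop (nhds (0+2*0)) := (tlog 2).add ((tlog 1).const_mul 2)
  have hlo : Tendsto (fun n:ℕ => (-2)*((Real.log ((n:ℝ)+1))^0/n)) atTop (nhds ((-2)*0)) :=
    (tlog 0).const_mul (-2)
  norm_num at hup hlo
  apply tendsto_of_tendsto_of_tendsto_of_le_of_le' hlo hup
  · filter_upwards [eventually_ge_atTop 1] with n hn
    have hn0 : (0:ℝ) ≤ n := Nat.cast_nonneg n
    have hb := (eQ_bounds n hn).1
    rw [show -(2*((n:ℝ))⁻¹) = (-2)/(n:ℝ) by ring]
    gcongr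
  · filter_upwards [eventually_ge_atTop 1] with n hn
    have hn0 : (0:ℝ) ≤ n := Nat.cast_nonneg n
    have hb := (eQ_bounds n hn).2
    rw [show Real.log ((n:ℝ)+1)^2/(n:ℝ) + 2*(Real.log ((n:ℝ)+1)/(n:ℝ))
        = (Real.log ((n:ℝ)+1)^2 + 2*Real.log ((n:ℝ)+1))/(n:ℝ) by ring]
    gcongr

lemma hu : Tendsto (fun n:ℕ => Q n/(n:ℝ) - (L n/(n:ℝ))^2) atTop (nhds 1) := by
  have hident : (fun n:ℕ => 1 + eQ n/(n:ℝ) - 2*(eL n*Real.log n/(n:ℝ)) + 2*(eL n/(n:ℝ))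
      - (eL n/(n:ℝ))^2) =ᶠ[atTop] (fun n:ℕ => Q n/(n:ℝ) - (L n/(n:ℝ))^2) := by
    filter_upwards [eventually_ge_atTop 1] with n hn
    have hn0 : (n:ℝ) ≠ 0 := Nat.cast_ne_zero.mpr (by omega)
    rw [L_eq, Q_eq]
    field_simp
    ring
  have hc1 : Tendsto (fun _:ℕ => (1:ℝ)) atTop (nhds 1) := tendsto_const_nhds
  have hlim := ((((hc1.add l3).sub (l2.const_mul 2)).add
      (l1.const_mul 2)).sub (l1.pow 2))
  norm_num at hlim
  exact Tendsto.congr' hident (by simpa [inv_pow] using hlim)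

lemma hw : Tendsto (fun n:ℕ => Q n / ((n:ℝ)*(Real.log n)^2)) atTop (nhds 1) := by
  have hident : (fun n:ℕ => 1 - 2*(Real.log n)⁻¹ + 2*((Real.log n)⁻¹)^2
      + (eQ n/(n:ℝ))*((Real.log n)⁻¹)^2) =ᶠ[atTop]
      (fun n:ℕ => Q n / ((n:ℝ)*(Real.log n)^2)) := by
    filter_upwards [eventually_ge_atTop 2] with n hn
    have hn0 : (n:ℝ) ≠ 0 := Nat.cast_ne_zero.mpr (by omega)
    have hl : Real.log (n:ℝ) ≠ 0 := by
      have : (1:ℝ) < n := by exact_mod_cast hn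
      exact (Real.log_pos this).ne'
    rw [Q_eq]
    field_simp
  have hc1 : Tendsto (fun _:ℕ => (1:ℝ)) atTop (nhds 1) := tendsto_const_nhds
  have hlim := (((hc1.sub (tinv.const_mul 2)).add
      ((tinv.pow 2).const_mul 2)).add (l3.mul (tinv.pow 2)))
  norm_num at hlim
  exact Tendsto.congr' hident (by simpa [inv_pow] using hlim)

lemma hs : Tendsto (fun n:ℕ => L n / ((n:ℝ)*(Real.log n)^2)) atTop (nhds 0) := by
  have hident : (fun n:ℕ => (Real.log n)⁻¹ - ((Real.log n)⁻¹)^2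
      + (eL n/(n:ℝ))*((Real.log n)⁻¹)^2) =ᶠ[atTop]
      (fun n:ℕ => L n / ((n:ℝ)*(Real.log n)^2)) := by
    filter_upwards [eventually_ge_atTop 2] with n hn
    have hn0 : (n:ℝ) ≠ 0 := Nat.cast_ne_zero.mpr (by omega)
    have hl : Real.log (n:ℝ) ≠ 0 := by
      have : (1:ℝ) < n := by exact_mod_cast hn
      exact (Real.log_pos this).ne'
    rw [L_eq]
    field_simp
  have hlim := ((tinv.sub (tinv.pow 2)).add (l1.mul (tinv.pow 2)))
  norm_num at hlim
  exact Tendsto.congr' hident (by simpa [inv_pow] using hlim)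

lemma hr : Tendsto (fun n:ℕ => ((n:ℝ) - Q n) / ((n:ℝ)*(Real.log n)^2)) atTop (nhds (-1)) := by
  have hident : (fun n:ℕ => ((Real.log n)⁻¹)^2 - Q n/((n:ℝ)*(Real.log n)^2)) =ᶠ[atTop]
      (fun n:ℕ => ((n:ℝ) - Q n) / ((n:ℝ)*(Real.log n)^2)) := by
    filter_upwards [eventually_ge_atTop 2] with n hn
    have hn0 : (n:ℝ) ≠ 0 := Nat.cast_ne_zero.mpr (by omega)
    have hl : Real.log (n:ℝ) ≠ 0 := by
      have : (1:ℝ) < n := by exact_mod_cast hn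
      exact (Real.log_pos this).ne'
    field_simp
  have hlim := ((tinv.pow 2).sub hw)
  norm_num at hlim
  exact Tendsto.congr' hident (by simpa [inv_pow] using hlim)

lemma hv : Tendsto (fun n:ℕ =>
    ((n:ℝ) + Q n + Real.sqrt (((n:ℝ) - Q n)^2 + 4*(L n)^2)) / ((n:ℝ)*(Real.log n)^2))
    atTop (nhds 2) := by
  have hsq : Tendsto (fun n:ℕ =>
      Real.sqrt ((((n:ℝ) - Q n)/((n:ℝ)*(Real.log n)^2))^2
        + 4*(L n/((n:ℝ)*(Real.log n)^2))^2)) atTop (nhds 1) := by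
    have hd := (hr.pow 2).add ((hs.pow 2).const_mul 4)
    norm_num at hd
    have := (Real.continuous_sqrt.tendsto 1).comp hd
    simpa [Function.comp_def] using this
  have hident : (fun n:ℕ => (((Real.log n)⁻¹)^2 + Q n/((n:ℝ)*(Real.log n)^2))
      + Real.sqrt ((((n:ℝ) - Q n)/((n:ℝ)*(Real.log n)^2))^2
        + 4*(L n/((n:ℝ)*(Real.log n)^2))^2)) =ᶠ[atTop]
      (fun n:ℕ => ((n:ℝ) + Q n + Real.sqrt (((n:ℝ) - Q n)^2 + 4*(L n)^2))
        / ((n:ℝ)*(Real.log n)^2)) := by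
    filter_upwards [eventually_ge_atTop 2] with n hn
    have hn0 : (0:ℝ) < n := by
      have : (1:ℝ) < n := by exact_mod_cast hn
      linarith
    have hl : (0:ℝ) < Real.log (n:ℝ) := Real.log_pos (by exact_mod_cast hn)
    have hc : (0:ℝ) < (n:ℝ)*(Real.log n)^2 := by positivity
    have hsqrt : Real.sqrt ((((n:ℝ) - Q n)/((n:ℝ)*(Real.log n)^2))^2
        + 4*(L n/((n:ℝ)*(Real.log n)^2))^2)
        = Real.sqrt (((n:ℝ) - Q n)^2 + 4*(L n)^2) / ((n:ℝ)*(Real.log n)^2) := by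
      rw [show (((n:ℝ) - Q n)/((n:ℝ)*(Real.log n)^2))^2
          + 4*(L n/((n:ℝ)*(Real.log n)^2))^2
          = (((n:ℝ) - Q n)^2 + 4*(L n)^2) / ((n:ℝ)*(Real.log n)^2)^2 by
        field_simp]
      rw [Real.sqrt_div (by positivity), Real.sqrt_sq hc.le]
    rw [hsqrt]
    field_simp
  have hlim := ((tinv.pow 2).add hw).add hsq
  norm_num at hlim
  exact Tendsto.congr' hident (by simpa [inv_pow] using hlim)


/-- With `T n = n + ∑ ln² j` and `Δ n = (n - ∑ ln² j)² + 4 (∑ ln j)²`,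
`(T n - √(Δ n)) · ln² n / n → 2`. -/
theorem lam_min_asymp :
    Filter.Tendsto
      (fun n : ℕ =>
        (((n : ℝ) + Q n) - Real.sqrt (((n : ℝ) - Q n)^2 + 4 * (L n)^2)) *
          (Real.log n)^2 / (n : ℝ))
      Filter.atTop (nhds 2) := by
  have hident : (fun n:ℕ => 4*(Q n/(n:ℝ) - (L n/(n:ℝ))^2)
      / (((n:ℝ) + Q n + Real.sqrt (((n:ℝ) - Q n)^2 + 4*(L n)^2)) / ((n:ℝ)*(Real.log n)^2)))
      =ᶠ[atTop]
      (fun n : ℕ =>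
        (((n : ℝ) + Q n) - Real.sqrt (((n : ℝ) - Q n)^2 + 4 * (L n)^2)) *
          (Real.log n)^2 / (n : ℝ)) := by
    filter_upwards [eventually_ge_atTop 2] with n hn
    have hn0 : (0:ℝ) < n := by
      have : (1:ℝ) < n := by exact_mod_cast hn
      linarith
    have hl : (0:ℝ) < Real.log (n:ℝ) := Real.log_pos (by exact_mod_cast hn)
    have hQ : 0 ≤ Q n := by unfold Q; exact Finset.sum_nonneg (fun j _ => sq_nonneg _)
    set S := Real.sqrt (((n:ℝ) - Q n)^2 + 4*(L n)^2) with hSdef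
    have hSnn : 0 ≤ S := Real.sqrt_nonneg _
    have hS2 : S^2 = ((n:ℝ) - Q n)^2 + 4*(L n)^2 := Real.sq_sqrt (by positivity)
    have hpos : (0:ℝ) < (n:ℝ) + Q n + S := by linarith
    have key : ((n:ℝ) + Q n - S) * ((n:ℝ) + Q n + S) = 4*((n:ℝ)*Q n - (L n)^2) := by
      linear_combination -hS2
    have hEq : (n:ℝ) + Q n - S = 4*((n:ℝ)*Q n - (L n)^2) / ((n:ℝ) + Q n + S) := by
      rw [eq_div_iff hpos.ne']
      exact key
    rw [hEq]
    field_simp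
  have hlim := (hu.const_mul 4).div hv (by norm_num)
  norm_num at hlim
  exact Tendsto.congr' hident (by simpa [inv_pow, Pi.div_def] using hlim)
end
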